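/- The system IRIT (obtained from IRIK by adding all instances of the axiom (I-T) φ ∧ I(φ ∨ ψ) → Iφ) is sound and strongly complete with respect to the class of reflexive proper bi-models: for every set Γ of IRI-formulas and every IRI-formula φ, φ is a logical consequence of Γ over the class of bi-models with R ⊆ R∙ in which both R and R∙ are reflexive if and only if there is a finite list γ₁,…,γₖ of members of Γ with ⊢_IRIT (γ₁ ∧ ⋯ ∧ γₖ) → φ. -/

import Mathlib

/-- The language IRI: φ ::= pᵢ | ¬φ | φ ∧ φ | I φ | IR φ. -/
inductive IRIForm : Type
  | atom : ℕ → IRIForm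
  | neg  : IRIForm → IRIForm
  | and  : IRIForm → IRIForm → IRIForm
  | ign  : IRIForm → IRIForm
  | rign : IRIForm → IRIForm

namespace IRIForm

/-- Classical disjunction. -/
def or (φ ψ : IRIForm) : IRIForm := neg (and (neg φ) (neg ψ))

/-- Classical implication. -/
def imp (φ ψ : IRIForm) : IRIForm := neg (and φ (neg ψ))

/-- Classical biconditional. -/
def iff (φ ψ : IRIForm) : IRIForm := and (imp φ ψ) (imp ψ φ)

/-- A fixed tautology (empty conjunction). -/
def top : IRIForm := imp (atom 0) (atom 0)

/-- Finite conjunction of a list of formulas. -/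
def bigAnd : List IRIForm → IRIForm
  | [] => top
  | [φ] => φ
  | φ :: ψ :: l => and φ (bigAnd (ψ :: l))

/-- `φ` is an instance of a propositional tautology: every Boolean valuation that respects
negation and conjunction (treating all other formulas as atoms) makes `φ` true. -/
def Taut (φ : IRIForm) : Prop :=
  ∀ v : IRIForm → Bool,
    (∀ ψ, v (neg ψ) = !(v ψ)) →
    (∀ ψ χ, v (and ψ χ) = ((v ψ) && (v χ))) →
    v φ = true

end IRIForm

/-- A bi-model: worlds, two accessibility relations, and a valuation. -/
structure BiModel where
  W : Type
  R : W → W → Prop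
  Rb : W → W → Prop
  V : ℕ → W → Prop

/-- A bi-model is proper if R ⊆ R∙. -/
def BiModel.Proper (M : BiModel) : Prop := ∀ s t, M.R s t → M.Rb s t

/-- Truth of an IRI-formula at a world of a bi-model. -/
def Sat (M : BiModel) : M.W → IRIForm → Prop
  | s, .atom n => M.V n s
  | s, .neg φ => ¬ Sat M s φ
  | s, .and φ ψ => Sat M s φ ∧ Sat M s ψ
  | s, .ign φ => (∃ t, M.R s t ∧ Sat M t φ) ∧ (∃ u, M.R s u ∧ ¬ Sat M u φ)
  | s, .rign φ =>
      ((∃ t, M.R s t ∧ Sat M t φ) ∧ (∃ u, M.R s u ∧ ¬ Sat M u φ)) ∧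
      (∃ t, M.Rb s t ∧
        ¬ ((∃ t', M.R t t' ∧ Sat M t' φ) ∧ (∃ u, M.R t u ∧ ¬ Sat M u φ)))

open IRIForm in
/-- The proof system IRIT = IRIK + (I-T) φ ∧ I(φ∨ψ) → Iφ. -/
inductive ProvT : IRIForm → Prop
  | taut {φ} : Taut φ → ProvT φ
  | mp {φ ψ} : ProvT (imp φ ψ) → ProvT φ → ProvT ψ
  | iEqu (φ) : ProvT (iff (ign φ) (ign (neg φ)))
  | irEqu (φ) : ProvT (iff (rign φ) (rign (neg φ)))
  | iCon (φ ψ) : ProvT (imp (ign (and φ ψ)) (or (ign φ) (ign ψ)))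
  | iDis (φ ψ χ) : ProvT (imp (and (ign (or φ ψ)) (ign (or (neg φ) χ))) (ign φ))
  | riI (φ) : ProvT (imp (rign φ) (ign φ))
  | mix (φ χ) : ProvT (imp (and (ign φ) (ign (or (ign φ) χ))) (rign φ))
  | rNI {φ} : ProvT φ → ProvT (neg (ign φ))
  | reI {φ ψ} : ProvT (iff φ ψ) → ProvT (iff (ign φ) (ign ψ))
  | reRI {φ ψ} : ProvT (iff φ ψ) → ProvT (iff (rign φ) (rign ψ))
  | rMix {l : List IRIForm} {φ} :
      ProvT (imp (bigAnd (l.map ign)) (ign φ)) →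
      ProvT (imp (bigAnd (l.map fun χ => and (neg (rign χ)) (ign χ))) (neg (rign φ)))
  | iT (φ ψ) : ProvT (imp (and φ (ign (or φ ψ))) (ign φ))

-- semantic helper lemmas
namespace IRIForm

@[simp] lemma sat_neg (M : BiModel) (s : M.W) (φ : IRIForm) :
    Sat M s (neg φ) ↔ ¬ Sat M s φ := Iff.rfl

@[simp] lemma sat_and (M : BiModel) (s : M.W) (φ ψ : IRIForm) :
    Sat M s (and φ ψ) ↔ Sat M s φ ∧ Sat M s ψ := Iff.rfl

lemma sat_imp (M : BiModel) (s : M.W) (φ ψ : IRIForm) :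
    Sat M s (imp φ ψ) ↔ (Sat M s φ → Sat M s ψ) := by
  simp only [imp, sat_neg, sat_and]; tauto

lemma sat_or (M : BiModel) (s : M.W) (φ ψ : IRIForm) :
    Sat M s (or φ ψ) ↔ (Sat M s φ ∨ Sat M s ψ) := by
  simp only [or, sat_neg, sat_and]; tauto

lemma sat_iff (M : BiModel) (s : M.W) (φ ψ : IRIForm) :
    Sat M s (iff φ ψ) ↔ (Sat M s φ ↔ Sat M s ψ) := by
  simp only [iff, sat_and, sat_imp]; tauto

lemma sat_top (M : BiModel) (s : M.W) : Sat M s top := by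
  simp [top, sat_imp]

lemma sat_bigAnd (M : BiModel) (s : M.W) (l : List IRIForm) :
    Sat M s (bigAnd l) ↔ ∀ γ ∈ l, Sat M s γ := by
  induction l with
  | nil => simp [bigAnd, sat_top M s]
  | cons γ l ih =>
    cases l with
    | nil => simp [bigAnd]
    | cons ψ l' =>
      simp only [bigAnd, sat_and] at *
      constructor
      · rintro ⟨h1, h2⟩ χ hχ
        rcases List.mem_cons.1 hχ with rfl | hχ'
        · exact h1
        · exact ih.1 h2 χ hχ'
      · intro h
        exact ⟨h γ (by simp), ih.2 fun χ hχ => h χ (by simp [hχ])⟩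

lemma sat_of_taut {φ : IRIForm} (h : Taut φ) (M : BiModel) (s : M.W) : Sat M s φ := by
  classical
  have := h (fun ψ => decide (Sat M s ψ)) (fun ψ => by rw [Bool.eq_iff_iff]; simp [Sat]; exact @decide_eq_true_iff _ (Classical.propDecidable _)) (fun ψ χ => by rw [Bool.eq_iff_iff]; simp [Sat]; exact @decide_eq_true_iff _ (Classical.propDecidable _))
  simpa using this

/-- Soundness over proper reflexive bi-models. -/
theorem sound {φ : IRIForm} (h : ProvT φ) :
    ∀ M : BiModel, M.Proper → Reflexive M.R → Reflexive M.Rb → ∀ s, Sat M s φ := by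
  induction h with
  | taut h => exact fun M _ _ _ s => sat_of_taut h M s
  | mp h1 h2 ih1 ih2 =>
    intro M hp hr hrb s
    exact (sat_imp M s _ _).1 (ih1 M hp hr hrb s) (ih2 M hp hr hrb s)
  | iEqu φ =>
    intro M hp hr hrb s
    rw [sat_iff]
    show ((∃ t, _) ∧ _) ↔ _
    constructor
    · rintro ⟨⟨t, ht, hφt⟩, ⟨u, hu, hφu⟩⟩
      exact ⟨⟨u, hu, hφu⟩, ⟨t, ht, fun hn => hn hφt⟩⟩
    · rintro ⟨⟨t, ht, hφt⟩, ⟨u, hu, hφu⟩⟩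
      exact ⟨⟨u, hu, not_not.1 hφu⟩, ⟨t, ht, hφt⟩⟩
  | irEqu φ =>
    intro M hp hr hrb s
    rw [sat_iff]
    show (((∃ t, _) ∧ _) ∧ _) ↔ _
    constructor
    · rintro ⟨⟨⟨t, ht, hφt⟩, ⟨u, hu, hφu⟩⟩, ⟨w, hw, hnI⟩⟩
      refine ⟨⟨⟨u, hu, hφu⟩, ⟨t, ht, fun hn => hn hφt⟩⟩, ⟨w, hw, ?_⟩⟩
      rintro ⟨⟨t', ht', hφt'⟩, ⟨u', hu', hφu'⟩⟩
      exact hnI ⟨⟨u', hu', not_not.1 hφu'⟩, ⟨t', ht', hφt'⟩⟩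
    · rintro ⟨⟨⟨t, ht, hφt⟩, ⟨u, hu, hφu⟩⟩, ⟨w, hw, hnI⟩⟩
      refine ⟨⟨⟨u, hu, not_not.1 hφu⟩, ⟨t, ht, hφt⟩⟩, ⟨w, hw, ?_⟩⟩
      rintro ⟨⟨t', ht', hφt'⟩, ⟨u', hu', hφu'⟩⟩
      exact hnI ⟨⟨u', hu', hφu'⟩, ⟨t', ht', fun hn => hn hφt'⟩⟩
  | iCon φ ψ =>
    intro M hp hr hrb s
    rw [sat_imp, sat_or]
    rintro ⟨⟨t, ht, hφt, hψt⟩, ⟨u, hu, hnu⟩⟩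
    by_cases hφu : Sat M u φ
    · right
      exact ⟨⟨t, ht, hψt⟩, ⟨u, hu, fun hψu => hnu ⟨hφu, hψu⟩⟩⟩
    · left
      exact ⟨⟨t, ht, hφt⟩, ⟨u, hu, hφu⟩⟩
  | iDis φ ψ χ =>
    intro M hp hr hrb s
    rw [sat_imp, sat_and]
    rintro ⟨⟨⟨t, ht, hφt⟩, ⟨u, hu, hnu⟩⟩, ⟨⟨t', ht', hφt'⟩, ⟨u', hu', hnu'⟩⟩⟩
    rw [sat_or] at hnu hnu'
    push_neg at hnu hnu'
    refine ⟨⟨u', hu', ?_⟩, ⟨u, hu, hnu.1⟩⟩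
    have := hnu'.1
    rw [sat_neg] at this
    exact not_not.1 this
  | riI φ =>
    intro M hp hr hrb s
    rw [sat_imp]
    exact fun h => h.1
  | mix φ χ =>
    intro M hp hr hrb s
    rw [sat_imp, sat_and]
    rintro ⟨hI, ⟨_, ⟨u, hu, hnu⟩⟩⟩
    rw [sat_or] at hnu
    push_neg at hnu
    exact ⟨hI, ⟨u, hp s u hu, hnu.1⟩⟩
  | rNI h ih =>
    intro M hp hr hrb s
    rintro ⟨_, ⟨u, hu, hnu⟩⟩
    exact hnu (ih M hp hr hrb u)
  | reI h ih =>
    intro M hp hr hrb s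
    rw [sat_iff]
    have hiff : ∀ t : M.W, Sat M t _ ↔ Sat M t _ :=
      fun t => (sat_iff M t _ _).1 (ih M hp hr hrb t)
    constructor
    · rintro ⟨⟨t, ht, hφt⟩, ⟨u, hu, hnu⟩⟩
      exact ⟨⟨t, ht, (hiff t).1 hφt⟩, ⟨u, hu, fun hn => hnu ((hiff u).2 hn)⟩⟩
    · rintro ⟨⟨t, ht, hφt⟩, ⟨u, hu, hnu⟩⟩
      exact ⟨⟨t, ht, (hiff t).2 hφt⟩, ⟨u, hu, fun hn => hnu ((hiff u).1 hn)⟩⟩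
  | reRI h ih =>
    rename_i φ' ψ'
    intro M hp hr hrb s
    rw [sat_iff]
    have hiff : ∀ t : M.W, Sat M t φ' ↔ Sat M t ψ' :=
      fun t => (sat_iff M t _ _).1 (ih M hp hr hrb t)
    have hIiff : ∀ t : M.W,
        ((∃ t', M.R t t' ∧ Sat M t' φ') ∧ (∃ u, M.R t u ∧ ¬ Sat M u φ')) ↔
        ((∃ t', M.R t t' ∧ Sat M t' ψ') ∧ (∃ u, M.R t u ∧ ¬ Sat M u ψ')) := by
      intro t
      constructor
      · rintro ⟨⟨t', ht', h1⟩, ⟨u, hu, h2⟩⟩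
        exact ⟨⟨t', ht', (hiff t').1 h1⟩, ⟨u, hu, fun hn => h2 ((hiff u).2 hn)⟩⟩
      · rintro ⟨⟨t', ht', h1⟩, ⟨u, hu, h2⟩⟩
        exact ⟨⟨t', ht', (hiff t').2 h1⟩, ⟨u, hu, fun hn => h2 ((hiff u).1 hn)⟩⟩
    constructor
    · rintro ⟨h1, ⟨w, hw, h2⟩⟩
      exact ⟨(hIiff s).1 h1, ⟨w, hw, fun hn => h2 ((hIiff w).2 hn)⟩⟩
    · rintro ⟨h1, ⟨w, hw, h2⟩⟩
      exact ⟨(hIiff s).2 h1, ⟨w, hw, fun hn => h2 ((hIiff w).1 hn)⟩⟩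
  | rMix h ih =>
    rename_i l φ'
    intro M hp hr hrb s
    rw [sat_imp]
    intro hhyp
    rw [sat_bigAnd] at hhyp
    rintro ⟨hIφ, ⟨w, hw, hnIw⟩⟩
    -- at w all I χᵢ hold; apply the premise validity at w
    have hall : Sat M w (bigAnd (_root_.List.map ign l)) := by
      rw [sat_bigAnd]
      intro γ hγ
      rw [List.mem_map] at hγ
      obtain ⟨χ, hχ, rfl⟩ := hγ
      have hmem := hhyp _ (List.mem_map_of_mem hχ)
      rw [sat_and] at hmem
      obtain ⟨hnr, hI⟩ := hmem
      -- hnr : ¬ Sat(rign χ), hI : Sat (ign χ); conclude Sat M w (ign χ)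
      rw [sat_neg] at hnr
      by_contra hc
      exact hnr ⟨hI, ⟨w, hw, hc⟩⟩
    have := (sat_imp M w _ _).1 (ih M hp hr hrb w) hall
    exact hnIw this
  | iT φ ψ =>
    intro M hp hr hrb s
    rw [sat_imp, sat_and]
    rintro ⟨hφ, ⟨⟨t, ht, hφt⟩, ⟨u, hu, hnu⟩⟩⟩
    rw [sat_or] at hnu
    push_neg at hnu
    exact ⟨⟨s, hr s, hφ⟩, ⟨u, hu, hnu.1⟩⟩

end IRIForm
namespace IRIForm

noncomputable instance : DecidableEq IRIForm := Classical.decEq IRIForm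

/-- "Known": K φ := φ ∧ ¬Iφ (over reflexive frames). -/
def kn (φ : IRIForm) : IRIForm := and φ (neg (ign φ))

def bot : IRIForm := neg top

-- tautology helper lemmas
lemma taut_id (A : IRIForm) : Taut (imp A A) := by
  intro v hn ha; simp only [imp, hn, ha]; cases v A <;> rfl

lemma prov_top : ProvT top := by
  apply ProvT.taut; intro v hn ha; simp only [top, imp, hn, ha]
  cases v (atom 0) <;> rfl

lemma pmp1 {A B : IRIForm} (h : Taut (imp A B)) (hA : ProvT A) : ProvT B :=
  (ProvT.taut h).mp hA

lemma pmp2 {A B C : IRIForm} (h : Taut (imp A (imp B C)))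
    (hA : ProvT A) (hB : ProvT B) : ProvT C :=
  (((ProvT.taut h).mp hA)).mp hB

lemma pmp3 {A B C D : IRIForm} (h : Taut (imp A (imp B (imp C D))))
    (hA : ProvT A) (hB : ProvT B) (hC : ProvT C) : ProvT D :=
  ((((ProvT.taut h).mp hA)).mp hB).mp hC

lemma imp_trans {A B C : IRIForm} (h1 : ProvT (imp A B)) (h2 : ProvT (imp B C)) :
    ProvT (imp A C) := by
  refine pmp2 ?_ h1 h2
  intro v hn ha; simp only [imp, hn, ha]
  cases v A <;> cases v B <;> cases v C <;> rfl

lemma prov_and_intro {A B : IRIForm} (h1 : ProvT A) (h2 : ProvT B) : ProvT (and A B) := by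
  refine pmp2 ?_ h1 h2
  intro v hn ha; simp only [imp, hn, ha]
  cases v A <;> cases v B <;> rfl

lemma imp_and {C A B : IRIForm} (h1 : ProvT (imp C A)) (h2 : ProvT (imp C B)) :
    ProvT (imp C (and A B)) := by
  refine pmp2 ?_ h1 h2
  intro v hn ha; simp only [imp, hn, ha]
  cases v A <;> cases v B <;> cases v C <;> rfl

lemma and_elim1 (A B : IRIForm) : ProvT (imp (and A B) A) := by
  apply ProvT.taut; intro v hn ha; simp only [imp, hn, ha]
  cases v A <;> cases v B <;> rfl

lemma and_elim2 (A B : IRIForm) : ProvT (imp (and A B) B) := by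
  apply ProvT.taut; intro v hn ha; simp only [imp, hn, ha]
  cases v A <;> cases v B <;> rfl

lemma prov_imp_of (A : IRIForm) {B : IRIForm} (h : ProvT B) : ProvT (imp A B) := by
  refine pmp1 ?_ h
  intro v hn ha; simp only [imp, hn, ha]
  cases v A <;> cases v B <;> rfl

lemma iff_elim1 {A B : IRIForm} (h : ProvT (iff A B)) : ProvT (imp A B) :=
  (and_elim1 _ _).mp h

lemma iff_elim2 {A B : IRIForm} (h : ProvT (iff A B)) : ProvT (imp B A) :=
  (and_elim2 _ _).mp h

lemma bigAnd_cons (γ : IRIForm) {l : List IRIForm} (h : l ≠ []) :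
    bigAnd (γ :: l) = and γ (bigAnd l) := by
  cases l with
  | nil => exact absurd rfl h
  | cons a l' => rfl

lemma bigAnd_elim {l : List IRIForm} {γ : IRIForm} (h : γ ∈ l) :
    ProvT (imp (bigAnd l) γ) := by
  induction l with
  | nil => cases h
  | cons a l' ih =>
    cases l' with
    | nil =>
      rcases List.mem_singleton.1 h with rfl
      exact ProvT.taut (taut_id _)
    | cons b l'' =>
      rw [bigAnd_cons a (by simp)]
      rcases List.mem_cons.1 h with rfl | h'
      · exact and_elim1 _ _
      · exact imp_trans (and_elim2 _ _) (ih h')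

lemma bigAnd_intro {π : IRIForm} {l : List IRIForm} (h : ∀ γ ∈ l, ProvT (imp π γ)) :
    ProvT (imp π (bigAnd l)) := by
  induction l with
  | nil => exact prov_imp_of _ prov_top
  | cons a l' ih =>
    cases l' with
    | nil => exact h a (by simp)
    | cons b l'' =>
      rw [bigAnd_cons a (by simp)]
      exact imp_and (h a (by simp)) (ih fun γ hγ => h γ (by simp [hγ]))

/-- Derivability from a set of hypotheses. -/
def Der (S : Set IRIForm) (φ : IRIForm) : Prop :=
  ∃ l : List IRIForm, (∀ γ ∈ l, γ ∈ S) ∧ ProvT (imp (bigAnd l) φ)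

def Con (S : Set IRIForm) : Prop := ¬ Der S bot

lemma der_of_prov {S : Set IRIForm} {φ : IRIForm} (h : ProvT φ) : Der S φ :=
  ⟨[], by simp, prov_imp_of _ h⟩

lemma der_of_mem {S : Set IRIForm} {φ : IRIForm} (h : φ ∈ S) : Der S φ :=
  ⟨[φ], by simpa using h, ProvT.taut (taut_id φ)⟩

lemma der_mp {S : Set IRIForm} {φ ψ : IRIForm}
    (h1 : Der S (imp φ ψ)) (h2 : Der S φ) : Der S ψ := by
  obtain ⟨l1, hl1, hp1⟩ := h1
  obtain ⟨l2, hl2, hp2⟩ := h2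
  refine ⟨l1 ++ l2, ?_, ?_⟩
  · intro γ hγ
    rcases List.mem_append.1 hγ with h | h
    · exact hl1 γ h
    · exact hl2 γ h
  · have e1 : ProvT (imp (bigAnd (l1 ++ l2)) (imp φ ψ)) :=
      imp_trans (bigAnd_intro fun γ hγ => bigAnd_elim (List.mem_append_left _ hγ)) hp1
    have e2 : ProvT (imp (bigAnd (l1 ++ l2)) φ) :=
      imp_trans (bigAnd_intro fun γ hγ => bigAnd_elim (List.mem_append_right _ hγ)) hp2
    refine pmp2 ?_ e1 e2
    intro v hn ha; simp only [imp, hn, ha]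
    cases v (bigAnd (l1 ++ l2)) <;> cases v φ <;> cases v ψ <;> rfl

lemma der_mono {S T : Set IRIForm} {φ : IRIForm} (h : S ⊆ T) (hd : Der S φ) : Der T φ := by
  obtain ⟨l, hl, hp⟩ := hd
  exact ⟨l, fun γ hγ => h (hl γ hγ), hp⟩

lemma con_mono {S T : Set IRIForm} (h : S ⊆ T) (hT : Con T) : Con S :=
  fun hd => hT (der_mono h hd)

/-- Deduction theorem. -/
lemma deduction {S : Set IRIForm} {χ φ : IRIForm}
    (h : Der (insert χ S) φ) : Der S (imp χ φ) := by
  classical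
  obtain ⟨l, hl, hp⟩ := h
  refine ⟨l.filter (· ≠ χ), ?_, ?_⟩
  · intro γ hγ
    have h1 := List.mem_filter.1 hγ
    rcases hl γ h1.1 with h2 | h2
    · exact absurd h2 (by simpa using h1.2)
    · exact h2
  · have key : ProvT (imp (and (bigAnd (l.filter (· ≠ χ))) χ) (bigAnd l)) := by
      apply bigAnd_intro
      intro γ hγ
      by_cases hc : γ = χ
      · subst hc; exact and_elim2 _ _
      · exact imp_trans (and_elim1 _ _)
          (bigAnd_elim (List.mem_filter.2 ⟨hγ, by simpa using hc⟩))
    have key2 : ProvT (imp (and (bigAnd (l.filter (· ≠ χ))) χ) φ) := imp_trans key hp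
    refine pmp1 ?_ key2
    intro v hn ha; simp only [imp, hn, ha]
    cases v (bigAnd (l.filter (· ≠ χ))) <;> cases v χ <;> cases v φ <;> rfl

def MCS (S : Set IRIForm) : Prop := Con S ∧ ∀ φ, φ ∈ S ∨ neg φ ∈ S

lemma der_bot_of_pos_neg {S : Set IRIForm} {φ : IRIForm}
    (h1 : Der S φ) (h2 : Der S (neg φ)) : Der S bot := by
  refine der_mp (der_mp (der_of_prov ?_) h2) h1
  apply ProvT.taut
  intro v hn ha; simp only [bot, top, imp, hn, ha]
  cases v φ <;> cases v (atom 0) <;> rfl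

lemma mcs_der {S : Set IRIForm} (hS : MCS S) {φ : IRIForm} (h : Der S φ) : φ ∈ S := by
  rcases hS.2 φ with h1 | h1
  · exact h1
  · exact absurd (der_bot_of_pos_neg h (der_of_mem h1)) hS.1

lemma mcs_thm {S : Set IRIForm} (hS : MCS S) {φ : IRIForm} (h : ProvT φ) : φ ∈ S :=
  mcs_der hS (der_of_prov h)

lemma mcs_mp {S : Set IRIForm} (hS : MCS S) {φ ψ : IRIForm}
    (h : imp φ ψ ∈ S) (h2 : φ ∈ S) : ψ ∈ S :=
  mcs_der hS (der_mp (der_of_mem h) (der_of_mem h2))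

lemma mcs_neg_iff {S : Set IRIForm} (hS : MCS S) (φ : IRIForm) :
    neg φ ∈ S ↔ φ ∉ S := by
  constructor
  · intro h1 h2
    exact hS.1 (der_bot_of_pos_neg (der_of_mem h2) (der_of_mem h1))
  · intro h1
    rcases hS.2 φ with h | h
    · exact absurd h h1
    · exact h

lemma mcs_and_iff {S : Set IRIForm} (hS : MCS S) (φ ψ : IRIForm) :
    and φ ψ ∈ S ↔ φ ∈ S ∧ ψ ∈ S := by
  constructor
  · intro h
    exact ⟨mcs_der hS (der_mp (der_of_prov (and_elim1 _ _)) (der_of_mem h)),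
      mcs_der hS (der_mp (der_of_prov (and_elim2 _ _)) (der_of_mem h))⟩
  · rintro ⟨h1, h2⟩
    exact mcs_der hS (der_mp (der_mp (der_of_prov (by
      apply ProvT.taut
      intro v hn ha; simp only [imp, hn, ha]
      cases v φ <;> cases v ψ <;> rfl)) (der_of_mem h1)) (der_of_mem h2))

/-- Lindenbaum's lemma. -/
lemma lindenbaum {S : Set IRIForm} (h : Con S) : ∃ T, S ⊆ T ∧ MCS T := by
  obtain ⟨T, hT, hmax⟩ := zorn_subset_nonempty {T : Set IRIForm | Con T}
    (fun c hc hchain hne => by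
      refine ⟨⋃₀ c, ?_, fun s hs => Set.subset_sUnion_of_mem hs⟩
      rintro ⟨l, hl, hp⟩
      -- find a single element of the chain containing all of l
      have key : ∀ l : List IRIForm, (∀ γ ∈ l, γ ∈ ⋃₀ c) →
          ∃ T ∈ c, ∀ γ ∈ l, γ ∈ T := by
        intro l
        induction l with
        | nil => exact fun _ => ⟨hne.choose, hne.choose_spec, by simp⟩
        | cons a l' ih =>
          intro hl
          obtain ⟨T1, hT1, hT1'⟩ := ih (fun γ hγ => hl γ (List.mem_cons_of_mem _ hγ))
          obtain ⟨T2, hT2⟩ := hl a (by simp)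
          obtain ⟨hT2c, haT2⟩ := hT2
          rcases hchain.total hT1 hT2c with hsub | hsub
          · exact ⟨T2, hT2c, fun γ hγ => by
              rcases List.mem_cons.1 hγ with rfl | h'
              · exact haT2
              · exact hsub (hT1' γ h')⟩
          · exact ⟨T1, hT1, fun γ hγ => by
              rcases List.mem_cons.1 hγ with rfl | h'
              · exact hsub haT2
              · exact hT1' γ h'⟩
      obtain ⟨T, hTc, hTl⟩ := key l hl
      exact (hc hTc) ⟨l, hTl, hp⟩) S h
  refine ⟨T, hT, hmax.1, fun φ => ?_⟩
  by_contra hcon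
  push_neg at hcon
  obtain ⟨h1, h2⟩ := hcon
  have hins1 : ¬ Con (insert φ T) := by
    intro hcc
    have := hmax.2 hcc (Set.subset_insert _ _)
    exact h1 (this (Set.mem_insert φ T))
  have hins2 : ¬ Con (insert (neg φ) T) := by
    intro hcc
    have := hmax.2 hcc (Set.subset_insert _ _)
    exact h2 (this (Set.mem_insert (neg φ) T))
  have d1 : Der T (imp φ bot) := deduction (not_not.1 hins1)
  have d2 : Der T (imp (neg φ) bot) := deduction (not_not.1 hins2)
  refine hmax.1 (der_mp (der_mp (der_of_prov ?_) d1) d2)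
  apply ProvT.taut
  intro v hn ha; simp only [bot, top, imp, hn, ha]
  cases v φ <;> cases v (atom 0) <;> rfl

end IRIForm
namespace IRIForm

lemma kn_mono {A B : IRIForm} (h : ProvT (imp A B)) : ProvT (imp (kn A) (kn B)) := by
  have hiff : ProvT (iff B (or A B)) := by
    refine pmp1 ?_ h
    intro v hn ha; simp only [imp, iff, or, hn, ha]
    cases v A <;> cases v B <;> rfl
  have hI : ProvT (iff (ign B) (ign (or A B))) := ProvT.reI hiff
  have hT := ProvT.iT A B
  refine pmp3 ?_ h hI hT
  intro v hn ha
  simp only [imp, iff, kn, hn, ha]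
  cases v A <;> cases v B <;> cases v (ign A) <;> cases v (ign B) <;>
    cases v (ign (or A B)) <;> rfl

lemma kn_and (A B : IRIForm) : ProvT (imp (and (kn A) (kn B)) (kn (and A B))) := by
  refine pmp1 ?_ (ProvT.iCon A B)
  intro v hn ha
  simp only [imp, or, kn, hn, ha]
  cases v A <;> cases v B <;> cases v (ign A) <;> cases v (ign B) <;>
    cases v (ign (and A B)) <;> rfl

lemma kn_top : ProvT (kn top) := prov_and_intro prov_top (ProvT.rNI prov_top)

lemma kn_collect : ∀ l : List IRIForm, ProvT (imp (bigAnd (l.map kn)) (kn (bigAnd l)))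
  | [] => prov_imp_of _ kn_top
  | [a] => ProvT.taut (taut_id (kn a))
  | (a :: b :: l'') => by
      have ih := kn_collect (b :: l'')
      have h1 : ProvT (imp (and (kn a) (bigAnd ((b :: l'').map kn)))
          (and (kn a) (kn (bigAnd (b :: l''))))) :=
        imp_and (and_elim1 _ _) (imp_trans (and_elim2 _ _) ih)
      have h2 := imp_trans h1 (kn_and a (bigAnd (b :: l'')))
      show ProvT (imp (bigAnd ((a :: b :: l'').map kn)) (kn (bigAnd (a :: b :: l''))))
      have e : (a :: b :: l'').map kn = kn a :: (b :: l'').map kn := rfl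
      rw [e, bigAnd_cons _ (by simp)]
      exact h2

lemma kn_dist {l : List IRIForm} {χ : IRIForm} (h : ProvT (imp (bigAnd l) χ)) :
    ProvT (imp (bigAnd (l.map kn)) (kn χ)) :=
  imp_trans (kn_collect l) (kn_mono h)

lemma mix_i (ψ : IRIForm) :
    ProvT (imp (and (ign ψ) (neg (rign ψ))) (neg (ign (ign ψ)))) := by
  have hiff : ProvT (iff (ign (or (ign ψ) (ign ψ))) (ign (ign ψ))) := by
    apply ProvT.reI
    apply ProvT.taut
    intro v hn ha; simp only [iff, imp, or, hn, ha]
    cases v (ign ψ) <;> rfl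
  refine pmp2 ?_ (ProvT.mix ψ (ign ψ)) hiff
  intro v hn ha; simp only [imp, iff, hn, ha]
  cases v (ign ψ) <;> cases v (rign ψ) <;> cases v (ign (or (ign ψ) (ign ψ))) <;>
    cases v (ign (ign ψ)) <;> rfl

lemma mcs_imp {S : Set IRIForm} (hS : MCS S) {A B : IRIForm}
    (h : ProvT (imp A B)) (hA : A ∈ S) : B ∈ S :=
  mcs_mp hS (mcs_thm hS h) hA

lemma mcs_ign_neg_iff {S : Set IRIForm} (hS : MCS S) (φ : IRIForm) :
    ign (neg φ) ∈ S ↔ ign φ ∈ S :=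
  ⟨mcs_imp hS (iff_elim2 (ProvT.iEqu φ)), mcs_imp hS (iff_elim1 (ProvT.iEqu φ))⟩

/-- Canonical worlds. -/
def CW : Type := {S : Set IRIForm // MCS S}

def canR (S T : CW) : Prop := ∀ ψ, kn ψ ∈ S.1 → ψ ∈ T.1

def canRb (S T : CW) : Prop :=
  ∀ ψ, ign ψ ∈ S.1 → neg (rign ψ) ∈ S.1 → ign ψ ∈ T.1

def canM : BiModel := ⟨CW, canR, canRb, fun n S => atom n ∈ S.1⟩

@[simp] lemma canM_W : canM.W = CW := rfl
@[simp] lemma canM_R (S T : CW) : canM.R S T = canR S T := rfl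
@[simp] lemma canM_Rb (S T : CW) : canM.Rb S T = canRb S T := rfl
@[simp] lemma canM_V (n : ℕ) (S : CW) : canM.V n S = (atom n ∈ S.1) := rfl

lemma canR_refl : Reflexive canR := by
  intro S ψ h
  exact ((mcs_and_iff S.2 _ _).1 h).1

lemma canRb_refl : Reflexive canRb := fun S ψ h _ => h

lemma can_proper : canM.Proper := by
  intro S T hRT ψ hI hnr
  have h1 : neg (ign (ign ψ)) ∈ S.1 :=
    mcs_imp S.2 (mix_i ψ) ((mcs_and_iff S.2 _ _).2 ⟨hI, hnr⟩)
  exact hRT (ign ψ) ((mcs_and_iff S.2 _ _).2 ⟨hI, h1⟩)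

/-- Consistency of the K-witness set with χ, assuming kn (neg χ) ∉ S. -/
lemma con_kset_insert {S : Set IRIForm} (hS : MCS S) {χ : IRIForm}
    (h : kn (neg χ) ∉ S) : Con (insert χ {ψ | kn ψ ∈ S}) := by
  intro hder
  have hd := deduction hder
  obtain ⟨l, hl, hp⟩ := hd
  have hp' : ProvT (imp (bigAnd l) (neg χ)) := by
    refine imp_trans hp ?_
    apply ProvT.taut
    intro v hn ha; simp only [imp, bot, top, hn, ha]
    cases v χ <;> cases v (atom 0) <;> rfl
  have hk := kn_dist hp'
  have hder2 : Der S (kn (neg χ)) := by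
    refine der_mp (der_of_prov hk) ⟨l.map kn, ?_, ProvT.taut (taut_id _)⟩
    intro γ hγ
    obtain ⟨γ', hγ', rfl⟩ := List.mem_map.1 hγ
    exact hl γ' hγ'
  exact h (mcs_der hS hder2)

end IRIForm
namespace IRIForm

lemma sat_ign_can (S : CW) (φ : IRIForm) :
    Sat canM S (ign φ) ↔
      (∃ T : CW, canR S T ∧ Sat canM T φ) ∧ (∃ U : CW, canR S U ∧ ¬ Sat canM U φ) :=
  Iff.rfl

lemma sat_rign_can (S : CW) (φ : IRIForm) :
    Sat canM S (rign φ) ↔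
      Sat canM S (ign φ) ∧ (∃ T : CW, canRb S T ∧ ¬ Sat canM T (ign φ)) :=
  Iff.rfl

lemma ign_equiv {φ : IRIForm} (IH : ∀ X : CW, φ ∈ X.1 ↔ Sat canM X φ) (S : CW) :
    ign φ ∈ S.1 ↔ Sat canM S (ign φ) := by
  rw [sat_ign_can]
  constructor
  · intro h
    have hk1 : kn (neg φ) ∉ S.1 := by
      intro hkn
      have h1 : neg (ign (neg φ)) ∈ S.1 := ((mcs_and_iff S.2 _ _).1 hkn).2
      have h2 : ign (neg φ) ∈ S.1 := (mcs_ign_neg_iff S.2 φ).2 h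
      exact (mcs_neg_iff S.2 _).1 h1 h2
    obtain ⟨T, hT, hTm⟩ := lindenbaum (con_kset_insert S.2 hk1)
    have hk2 : kn (neg (neg φ)) ∉ S.1 := by
      intro hkn
      have hknφ : kn φ ∈ S.1 := by
        refine mcs_imp S.2 (kn_mono ?_) hkn
        apply ProvT.taut
        intro v hn ha; simp only [imp, hn, ha]
        cases v φ <;> rfl
      have h1 : neg (ign φ) ∈ S.1 := ((mcs_and_iff S.2 _ _).1 hknφ).2
      exact (mcs_neg_iff S.2 _).1 h1 h
    obtain ⟨U, hU, hUm⟩ := lindenbaum (con_kset_insert S.2 hk2)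
    refine ⟨⟨⟨T, hTm⟩, ?_, ?_⟩, ⟨⟨U, hUm⟩, ?_, ?_⟩⟩
    · intro ψ hψ; exact hT (Set.mem_insert_of_mem _ hψ)
    · exact (IH ⟨T, hTm⟩).1 (hT (Set.mem_insert _ _))
    · intro ψ hψ; exact hU (Set.mem_insert_of_mem _ hψ)
    · intro hs
      have hmem : φ ∈ U := (IH ⟨U, hUm⟩).2 hs
      exact (mcs_neg_iff hUm _).1 (hU (Set.mem_insert _ _)) hmem
  · rintro ⟨⟨T, hRT, hT⟩, ⟨U, hRU, hU⟩⟩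
    by_contra hni
    have hni' : neg (ign φ) ∈ S.1 := (mcs_neg_iff S.2 _).2 hni
    rcases S.2.2 φ with hφ | hφ
    · have hknφ : kn φ ∈ S.1 := (mcs_and_iff S.2 _ _).2 ⟨hφ, hni'⟩
      exact hU ((IH U).1 (hRU φ hknφ))
    · have h2 : ign (neg φ) ∉ S.1 := fun hc => hni ((mcs_ign_neg_iff S.2 φ).1 hc)
      have h3 : neg (ign (neg φ)) ∈ S.1 := (mcs_neg_iff S.2 _).2 h2
      have hknn : kn (neg φ) ∈ S.1 := (mcs_and_iff S.2 _ _).2 ⟨hφ, h3⟩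
      have h4 : neg φ ∈ T.1 := hRT (neg φ) hknn
      exact (mcs_neg_iff T.2 _).1 h4 ((IH T).2 hT)

lemma con_bset_insert {S : CW} {φ : IRIForm} (h : rign φ ∈ S.1) :
    Con (insert (neg (ign φ))
      {γ | ∃ ψ, γ = ign ψ ∧ ign ψ ∈ S.1 ∧ neg (rign ψ) ∈ S.1}) := by
  intro hder
  have hd := deduction hder
  obtain ⟨l, hl, hp⟩ := hd
  have hp' : ProvT (imp (bigAnd l) (ign φ)) := by
    refine imp_trans hp ?_
    apply ProvT.taut
    intro v hn ha; simp only [imp, bot, top, hn, ha]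
    cases v (ign φ) <;> cases v (atom 0) <;> rfl
  have extract : ∀ l' : List IRIForm,
      (∀ γ ∈ l', γ ∈ {γ | ∃ ψ, γ = ign ψ ∧ ign ψ ∈ S.1 ∧ neg (rign ψ) ∈ S.1}) →
      ∃ l₀ : List IRIForm, l' = l₀.map ign ∧
        ∀ ψ ∈ l₀, ign ψ ∈ S.1 ∧ neg (rign ψ) ∈ S.1 := by
    intro l'
    induction l' with
    | nil => exact fun _ => ⟨[], rfl, by simp⟩
    | cons a t ih =>
      intro hmem
      obtain ⟨l₀, hleq, hl₀⟩ := ih (fun γ hγ => hmem γ (List.mem_cons_of_mem _ hγ))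
      obtain ⟨ψ, hψeq, hψ1, hψ2⟩ := hmem a List.mem_cons_self
      refine ⟨ψ :: l₀, by simp [hleq, hψeq], ?_⟩
      intro χ hχ
      rcases List.mem_cons.1 hχ with rfl | hχ'
      · exact ⟨hψ1, hψ2⟩
      · exact hl₀ χ hχ'
  obtain ⟨l₀, hleq, hl₀⟩ := extract l hl
  rw [hleq] at hp'
  have hm := ProvT.rMix hp'
  have hder2 : Der S.1 (neg (rign φ)) := by
    refine der_mp (der_of_prov hm)
      ⟨l₀.map (fun χ => and (neg (rign χ)) (ign χ)), ?_, ProvT.taut (taut_id _)⟩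
    intro γ hγ
    obtain ⟨χ, hχ, rfl⟩ := List.mem_map.1 hγ
    exact (mcs_and_iff S.2 _ _).2 ⟨(hl₀ χ hχ).2, (hl₀ χ hχ).1⟩
  exact (mcs_neg_iff S.2 _).1 (mcs_der S.2 hder2) h

/-- The truth lemma for the canonical model. -/
theorem truth : ∀ (φ : IRIForm) (S : CW), φ ∈ S.1 ↔ Sat canM S φ := by
  intro φ
  induction φ with
  | atom n => exact fun S => Iff.rfl
  | neg φ ih => exact fun S => (mcs_neg_iff S.2 φ).trans (not_congr (ih S))
  | and φ ψ ihφ ihψ => exact fun S => (mcs_and_iff S.2 φ ψ).trans (and_congr (ihφ S) (ihψ S))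
  | ign φ ih => exact ign_equiv ih
  | rign φ ih =>
    intro S
    have hie := ign_equiv ih
    rw [sat_rign_can]
    constructor
    · intro h
      have hI : ign φ ∈ S.1 := mcs_imp S.2 (ProvT.riI φ) h
      refine ⟨(hie S).1 hI, ?_⟩
      obtain ⟨T, hT, hTm⟩ := lindenbaum (con_bset_insert h)
      refine ⟨⟨T, hTm⟩, ?_, ?_⟩
      · intro ψ h1 h2
        exact hT (Set.mem_insert_of_mem _ ⟨ψ, rfl, h1, h2⟩)
      · intro hs
        have hmem : ign φ ∈ T := (hie ⟨T, hTm⟩).2 hs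
        exact (mcs_neg_iff hTm _).1 (hT (Set.mem_insert _ _)) hmem
    · rintro ⟨hI, ⟨T, hRb, hnT⟩⟩
      have hIS : ign φ ∈ S.1 := (hie S).2 hI
      by_contra hn
      have hnr : neg (rign φ) ∈ S.1 := (mcs_neg_iff S.2 _).2 hn
      exact hnT ((hie T).1 (hRb φ hIS hnr))

end IRIForm
/-- IRIT is sound and strongly complete with respect to the class of reflexive proper
bi-models. -/
theorem irit_sound_complete_reflexive (Γ : Set IRIForm) (φ : IRIForm) :
    (∀ M : BiModel, M.Proper → Reflexive M.R → Reflexive M.Rb →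
      ∀ s, (∀ γ ∈ Γ, Sat M s γ) → Sat M s φ) ↔
    (∃ l : List IRIForm, (∀ γ ∈ l, γ ∈ Γ) ∧
      ProvT (IRIForm.imp (IRIForm.bigAnd l) φ)) := by
  open IRIForm in
  constructor
  · intro hval
    by_contra hn
    push_neg at hn
    have hcon : Con (insert (neg φ) Γ) := by
      intro hder
      have hd := deduction hder
      obtain ⟨l, hl, hp⟩ := hd
      have hp' : ProvT (imp (bigAnd l) φ) := by
        refine imp_trans hp ?_
        apply ProvT.taut
        intro v hng ha; simp only [imp, bot, top, hng, ha]
        cases v φ <;> cases v (atom 0) <;> rfl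
      exact hn l hl hp'
    obtain ⟨T, hT, hTm⟩ := lindenbaum hcon
    have hsat := hval canM can_proper canR_refl canRb_refl ⟨T, hTm⟩
      (fun γ hγ => (truth γ ⟨T, hTm⟩).1 (hT (Set.mem_insert_of_mem _ hγ)))
    have hmem := (truth φ ⟨T, hTm⟩).2 hsat
    exact (mcs_neg_iff hTm φ).1 (hT (Set.mem_insert _ _)) hmem
  · rintro ⟨l, hl, hp⟩ M hproper hr hrb s hΓ
    have h1 : Sat M s (bigAnd l) := (sat_bigAnd M s l).2 (fun γ hγ => hΓ γ (hl γ hγ))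
    exact (sat_imp M s _ _).1 (sound hp M hproper hr hrb s) h1
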